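/- arXiv:2603.18121 — 4 statements merged into one kernel-verified Lean document; each statement's English description precedes it below -/
import Mathlib

section
/- If A_1, ..., A_s are pairwise disjoint subsets of the natural numbers whose union is all of ℕ, and the sum of their Buck measure densities μ*(A_1) + ... + μ*(A_s) is at most 1, then each A_i is Buck measurable (i.e., μ*(A_i) + μ*(ℕ \ A_i) = 1 for each i). -/
open scoped BigOperators

/-- Buck's measure density of a set of natural numbers. -/
noncomputable def buckDensity (S : Set ℕ) : ℝ :=
  sInf {x : ℝ | ∃ (k : ℕ) (r D : Fin k → ℕ), (∀ j, 0 < D j) ∧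
    (S ⊆ ⋃ j, {n : ℕ | n % D j = r j % D j}) ∧ x = ∑ j, (1 : ℝ) / (D j : ℝ)}

/-- A set is Buck measurable if its density and its complement's density sum to 1. -/
def BuckMeasurable (S : Set ℕ) : Prop :=
  buckDensity S + buckDensity Sᶜ = 1

/-!
The complement of `A i` is covered by the other `A j`, so subadditivity gives
`μ*(A i) + μ*(A iᶜ) ≤ ∑ j, μ*(A j) ≤ 1`. The reverse inequality `1 ≤ μ*(S) + μ*(Sᶜ)` holds for
every `S`, because any finite cover of `ℕ` by progressions `r_j + (D_j)` has `∑ 1 / D_j ≥ 1`: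
counting the residues modulo `N = ∏ D_j`, the progression `r_j + (D_j)` meets exactly `N / D_j`
of them.
-/

open Finset

def buckCoverCosts (S : Set ℕ) : Set ℝ :=
  {x : ℝ | ∃ (k : ℕ) (r D : Fin k → ℕ), (∀ j, 0 < D j) ∧
    (S ⊆ ⋃ j, {n : ℕ | n % D j = r j % D j}) ∧ x = ∑ j, (1 : ℝ) / (D j : ℝ)}

lemma buckDensity_eq_sInf (S : Set ℕ) : buckDensity S = sInf (buckCoverCosts S) := rfl

lemma one_mem_buckCoverCosts (S : Set ℕ) : (1 : ℝ) ∈ buckCoverCosts S :=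
  ⟨1, fun _ => 0, fun _ => 1, fun _ => one_pos,
    fun n _ => Set.mem_iUnion.2 ⟨0, by simp [Nat.mod_one]⟩, by simp⟩

lemma nonneg_of_mem_buckCoverCosts {S : Set ℕ} {x : ℝ} (hx : x ∈ buckCoverCosts S) : 0 ≤ x := by
  obtain ⟨k, r, D, hD, hcov, rfl⟩ := hx
  positivity

lemma bddBelow_buckCoverCosts (S : Set ℕ) : BddBelow (buckCoverCosts S) :=
  ⟨0, fun _ => nonneg_of_mem_buckCoverCosts⟩

lemma add_mem_buckCoverCosts {S T : Set ℕ} {x y : ℝ} (hx : x ∈ buckCoverCosts S)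
    (hy : y ∈ buckCoverCosts T) : x + y ∈ buckCoverCosts (S ∪ T) := by
  obtain ⟨k₁, r₁, D₁, hD₁, hc₁, rfl⟩ := hx
  obtain ⟨k₂, r₂, D₂, hD₂, hc₂, rfl⟩ := hy
  refine ⟨k₁ + k₂, Fin.append r₁ r₂, Fin.append D₁ D₂, Fin.addCases (by simpa) (by simpa), ?_,
    by simp [Fin.sum_univ_add]⟩
  rintro n (hn | hn)
  · obtain ⟨j, hj⟩ := Set.mem_iUnion.1 (hc₁ hn)
    exact Set.mem_iUnion.2 ⟨Fin.castAdd k₂ j, by simpa using hj⟩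
  · obtain ⟨j, hj⟩ := Set.mem_iUnion.1 (hc₂ hn)
    exact Set.mem_iUnion.2 ⟨Fin.natAdd k₁ j, by simpa using hj⟩

lemma buckDensity_nonneg (S : Set ℕ) : 0 ≤ buckDensity S :=
  le_csInf ⟨1, one_mem_buckCoverCosts S⟩ fun _ => nonneg_of_mem_buckCoverCosts

lemma buckDensity_empty : buckDensity ∅ = 0 :=
  le_antisymm (csInf_le (bddBelow_buckCoverCosts ∅)
    ⟨0, Fin.elim0, Fin.elim0, fun j => j.elim0, by simp, by simp⟩) (buckDensity_nonneg ∅)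

lemma buckDensity_mono {S T : Set ℕ} (h : S ⊆ T) : buckDensity S ≤ buckDensity T := by
  refine csInf_le_csInf (bddBelow_buckCoverCosts S) ⟨1, one_mem_buckCoverCosts T⟩ ?_
  rintro x ⟨k, r, D, hD, hcov, rfl⟩
  exact ⟨k, r, D, hD, h.trans hcov, rfl⟩

lemma buckDensity_union_le (S T : Set ℕ) :
    buckDensity (S ∪ T) ≤ buckDensity S + buckDensity T := by
  rw [buckDensity_eq_sInf S, buckDensity_eq_sInf T, ← sub_le_iff_le_add]
  refine le_csInf ⟨1, one_mem_buckCoverCosts S⟩ fun x hx => ?_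
  rw [sub_le_iff_le_add, add_comm, ← sub_le_iff_le_add]
  refine le_csInf ⟨1, one_mem_buckCoverCosts T⟩ fun y hy => ?_
  rw [sub_le_iff_le_add']
  exact csInf_le (bddBelow_buckCoverCosts _) (add_mem_buckCoverCosts hx hy)

lemma buckDensity_biUnion_le {ι : Type*} (A : ι → Set ℕ) (t : Finset ι) :
    buckDensity (⋃ i ∈ t, A i) ≤ ∑ i ∈ t, buckDensity (A i) := by
  classical
  induction t using Finset.induction with
  | empty => simp [buckDensity_empty]
  | insert a t ha ih =>
    rw [Finset.sum_insert ha, Finset.set_biUnion_insert]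
    exact (buckDensity_union_le _ _).trans (by linarith)

lemma card_filter_range_modEq_of_dvd {N D : ℕ} (hD : 0 < D) (hdvd : D ∣ N) (v : ℕ) :
    #{n ∈ range N | n ≡ v [MOD D]} = N / D := by
  rw [← Nat.count_eq_card_filter_range, Nat.count_modEq_card _ hD, Nat.mod_eq_zero_of_dvd hdvd]
  simp

lemma one_le_sum_inv_of_covers_univ {k : ℕ} {r D : Fin k → ℕ} (hD : ∀ j, 0 < D j)
    (hcov : Set.univ ⊆ ⋃ j, {n : ℕ | n % D j = r j % D j}) :
    1 ≤ ∑ j, (1 : ℝ) / (D j : ℝ) := by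
  set N := ∏ j, D j
  have hN : (0 : ℝ) < N := by exact_mod_cast Finset.prod_pos fun j _ => hD j
  have hdvd (j : Fin k) : D j ∣ N := Finset.dvd_prod_of_mem D (mem_univ j)
  have hcard : N ≤ ∑ j, N / D j :=
    calc N = #(range N) := (card_range N).symm
      _ ≤ #(univ.biUnion fun j => {n ∈ range N | n ≡ r j [MOD D j]}) :=
          card_le_card fun n hn => by
            obtain ⟨j, hj⟩ := Set.mem_iUnion.1 (hcov (Set.mem_univ n))
            exact mem_biUnion.2 ⟨j, mem_univ j, mem_filter.2 ⟨hn, hj⟩⟩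
      _ ≤ ∑ j, #{n ∈ range N | n ≡ r j [MOD D j]} := card_biUnion_le
      _ = ∑ j, N / D j := by simp only [card_filter_range_modEq_of_dvd (hD _) (hdvd _)]
  have hreal : (N : ℝ) * 1 ≤ N * ∑ j, (1 : ℝ) / (D j : ℝ) :=
    calc (N : ℝ) * 1 = N := mul_one _
      _ ≤ ∑ j, ((N / D j : ℕ) : ℝ) := by exact_mod_cast hcard
      _ = N * ∑ j, (1 : ℝ) / (D j : ℝ) := by
          rw [Finset.mul_sum]
          refine Finset.sum_congr rfl fun j _ => ?_
          rw [Nat.cast_div (hdvd j) (by exact_mod_cast (hD j).ne'), mul_one_div]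
  exact le_of_mul_le_mul_left hreal hN

lemma one_le_buckDensity_univ : 1 ≤ buckDensity Set.univ := by
  refine le_csInf ⟨1, one_mem_buckCoverCosts _⟩ ?_
  rintro x ⟨k, r, D, hD, hcov, rfl⟩
  exact one_le_sum_inv_of_covers_univ hD hcov

lemma one_le_buckDensity_add_compl (S : Set ℕ) : 1 ≤ buckDensity S + buckDensity Sᶜ :=
  calc 1 ≤ buckDensity Set.univ := one_le_buckDensity_univ
    _ = buckDensity (S ∪ Sᶜ) := by rw [Set.union_compl_self]
    _ ≤ buckDensity S + buckDensity Sᶜ := buckDensity_union_le S Sᶜ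

lemma buckMeasurable_of_add_compl_le_one {S : Set ℕ} (h : buckDensity S + buckDensity Sᶜ ≤ 1) :
    BuckMeasurable S :=
  le_antisymm h (one_le_buckDensity_add_compl S)

lemma buckDensity_compl_le_sum_erase {ι : Type*} [Fintype ι] [DecidableEq ι] {A : ι → Set ℕ}
    (hcover : ⋃ i, A i = Set.univ) (i : ι) :
    buckDensity (A i)ᶜ ≤ ∑ j ∈ univ.erase i, buckDensity (A j) := by
  refine (buckDensity_mono fun n hn => ?_).trans (buckDensity_biUnion_le A _)
  obtain ⟨j, hj⟩ := Set.mem_iUnion.1 (hcover ▸ Set.mem_univ n)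
  exact Set.mem_biUnion (mem_erase.2 ⟨fun h => hn (h ▸ hj), mem_univ j⟩) hj

theorem stmt0_general (s : ℕ) (A : Fin s → Set ℕ)
    (hcover : (⋃ i, A i) = Set.univ)
    (hsum : ∑ i, buckDensity (A i) ≤ 1) :
    ∀ i, BuckMeasurable (A i) := by
  intro i
  refine buckMeasurable_of_add_compl_le_one ?_
  calc buckDensity (A i) + buckDensity (A i)ᶜ
      ≤ buckDensity (A i) + ∑ j ∈ univ.erase i, buckDensity (A j) :=
        by gcongr; exact buckDensity_compl_le_sum_erase hcover i
    _ = ∑ j, buckDensity (A j) := 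
        add_sum_erase univ (fun j => buckDensity (A j)) (mem_univ i)
    _ ≤ 1 := hsum

/-- If pairwise disjoint sets cover ℕ and their Buck densities sum to at most 1,
then each of them is Buck measurable. -/
theorem stmt0 (s : ℕ) (A : Fin s → Set ℕ)
    (hdisj : Pairwise fun i j => Disjoint (A i) (A j))
    (hcover : (⋃ i, A i) = Set.univ)
    (hsum : ∑ i, buckDensity (A i) ≤ 1) :
    ∀ i, BuckMeasurable (A i) :=
  stmt0_general s A hcover hsum
end

section
/- A sequence v : ℕ → [0,1] is Buck uniformly distributed modulo 1 if and only if for every ε > 0 there exist finitely many pairwise disjoint intervals I_1, ..., I_s covering [0,1) with |I_j| < ε such that each preimage v^{-1}(I_j) is Buck measurable with μ(v^{-1}(I_j)) = |I_j|. -/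
/-
Any finite cover of a set by residue classes can be replaced by a union of residue classes
modulo a common multiple `N` of the moduli without increasing its weight. Two such covers can
be taken modulo the same `N`, where they combine by plain inclusion–exclusion of residues; so
Buck's density is subadditive, and for disjoint measurable sets it is additive with a measurable
union.

Given a partition of `[0,1)` into pieces of length `< ε` with measurable preimages, the preimage
of `[a,b)` lies in the union of preimages of the pieces meeting `[a,b)`, and its complement in
the complement of the union over the pieces inside `[a,b)`. These pieces have total length within
`2ε` of `b - a`, so `μ*(P) ≤ b - a` and `μ*(Pᶜ) ≤ 1 - (b - a)`; since always
`μ*(P) + μ*(Pᶜ) ≥ 1`, both are equalities. Conversely, uniform distribution applies to the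
partition into the intervals `[j/m, (j+1)/m)`.
-/

open scoped BigOperators

/-- A `[0,1]`-valued sequence is Buck uniformly distributed mod 1 if the preimage of
every subinterval of `[0,1]` is Buck measurable with density equal to the length. -/
def BuckUD (v : ℕ → ℝ) : Prop :=
  ∀ a b : ℝ, 0 ≤ a → a ≤ b → b ≤ 1 →
    BuckMeasurable {n : ℕ | v n ∈ Set.Ico a b} ∧
    buckDensity {n : ℕ | v n ∈ Set.Ico a b} = b - a

open Finset

/-- `buckDensity S` is, by definition, the infimum of this set. -/
def buckCoverWeights (S : Set ℕ) : Set ℝ :=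
  {x : ℝ | ∃ (k : ℕ) (r D : Fin k → ℕ), (∀ j, 0 < D j) ∧
    (S ⊆ ⋃ j, {n : ℕ | n % D j = r j % D j}) ∧ x = ∑ j, (1 : ℝ) / (D j : ℝ)}

lemma one_mem_buckCoverWeights (S : Set ℕ) : (1 : ℝ) ∈ buckCoverWeights S :=
  ⟨1, fun _ => 0, fun _ => 1, fun _ => one_pos, fun n _ => by simp [Nat.mod_one], by simp⟩

lemma nonneg_of_mem_buckCoverWeights {S : Set ℕ} {x : ℝ} (hx : x ∈ buckCoverWeights S) :
    0 ≤ x := by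
  obtain ⟨k, r, D, -, -, rfl⟩ := hx
  positivity

lemma bddBelow_buckCoverWeights (S : Set ℕ) : BddBelow (buckCoverWeights S) :=
  ⟨0, fun _ => nonneg_of_mem_buckCoverWeights⟩

lemma card_filter_modEq_range_mul {N : ℕ} (hN : 0 < N) (M v : ℕ) :
    #{t ∈ range (M * N) | t ≡ v [MOD N]} = M := by
  rw [← Nat.count_eq_card_filter_range, Nat.count_modEq_card _ hN, Nat.mul_mod_left,
    Nat.mul_div_cancel _ hN]
  simp

lemma buckDensity_le_of_forall_mod_mem {S : Set ℕ} {N : ℕ} {F : Finset ℕ} (hN : 0 < N)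
    (hS : ∀ n ∈ S, n % N ∈ F) : buckDensity S ≤ #F / N := by
  refine csInf_le (bddBelow_buckCoverWeights S)
    ⟨#F, fun j => F.equivFin.symm j, fun _ => N, fun _ => hN, fun n hn => ?_,
      by simp [div_eq_mul_inv]⟩
  refine Set.mem_iUnion.mpr ⟨F.equivFin ⟨n % N, hS n hn⟩, ?_⟩
  simp

lemma exists_mod_mem_cover {S : Set ℕ} {x : ℝ} (hx : x ∈ buckCoverWeights S) :
    ∃ N₀ > 0, ∀ N > 0, N₀ ∣ N →
      ∃ F ⊆ range N, (∀ n ∈ S, n % N ∈ F) ∧ (#F : ℝ) ≤ N * x := by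
  obtain ⟨k, r, D, hD, hS, rfl⟩ := hx
  refine ⟨∏ j, D j, prod_pos fun j _ => hD j, fun N hN hN₀ => ?_⟩
  have hdvd (j : Fin k) : D j ∣ N := (dvd_prod_of_mem D (mem_univ j)).trans hN₀
  have hcard (j : Fin k) : #{t ∈ range N | t ≡ r j [MOD D j]} = N / D j := by
    have := card_filter_modEq_range_mul (hD j) (N / D j) (r j)
    rwa [Nat.div_mul_cancel (hdvd j)] at this
  refine ⟨{t ∈ range N | ∃ j, t ≡ r j [MOD D j]}, filter_subset _ _, fun n hn => ?_, ?_⟩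
  · obtain ⟨j, hj⟩ := Set.mem_iUnion.mp (hS hn)
    exact mem_filter.mpr ⟨mem_range.mpr (Nat.mod_lt n hN), j,
      (Nat.mod_mod_of_dvd n (hdvd j)).trans hj⟩
  have hsub : {t ∈ range N | ∃ j, t ≡ r j [MOD D j]} ⊆
      univ.biUnion fun j => {t ∈ range N | t ≡ r j [MOD D j]} := by
    intro t ht
    obtain ⟨htN, j, hj⟩ := mem_filter.mp ht
    exact mem_biUnion.mpr ⟨j, mem_univ j, mem_filter.mpr ⟨htN, hj⟩⟩
  calc (#{t ∈ range N | ∃ j, t ≡ r j [MOD D j]} : ℝ)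
      ≤ ∑ j, (#{t ∈ range N | t ≡ r j [MOD D j]} : ℝ) := by
        exact_mod_cast (card_le_card hsub).trans card_biUnion_le
    _ = ∑ j, (N : ℝ) * (1 / D j) := by
        refine sum_congr rfl fun j _ => ?_
        rw [hcard, Nat.cast_div (hdvd j) (by exact_mod_cast (hD j).ne')]
        ring
    _ = N * ∑ j, (1 : ℝ) / D j := (mul_sum _ _ _).symm

lemma exists_common_mod_mem_covers (S T : Set ℕ) {δ : ℝ} (hδ : 0 < δ) :
    ∃ N > 0, ∃ F ⊆ range N, ∃ G ⊆ range N,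
      (∀ n ∈ S, n % N ∈ F) ∧ (∀ n ∈ T, n % N ∈ G) ∧
      (#F : ℝ) ≤ N * (buckDensity S + δ) ∧ (#G : ℝ) ≤ N * (buckDensity T + δ) := by
  obtain ⟨x, hx, hxS⟩ := Real.lt_sInf_add_pos ⟨1, one_mem_buckCoverWeights S⟩ hδ
  obtain ⟨y, hy, hyT⟩ := Real.lt_sInf_add_pos ⟨1, one_mem_buckCoverWeights T⟩ hδ
  obtain ⟨N₁, hN₁, hS⟩ := exists_mod_mem_cover hx
  obtain ⟨N₂, hN₂, hT⟩ := exists_mod_mem_cover hy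
  have hN := Nat.mul_pos hN₁ hN₂
  obtain ⟨F, hF, hSF, hFx⟩ := hS _ hN (dvd_mul_right _ _)
  obtain ⟨G, hG, hTG, hGy⟩ := hT _ hN (dvd_mul_left _ _)
  exact ⟨_, hN, F, hF, G, hG, hSF, hTG, hFx.trans (by gcongr; exact hxS.le),
    hGy.trans (by gcongr; exact hyT.le)⟩

lemma buckDensity_inter_le_of_union_eq_univ {S T : Set ℕ} (h : S ∪ T = Set.univ) :
    buckDensity (S ∩ T) ≤ buckDensity S + buckDensity T - 1 := by
  refine le_of_forall_pos_le_add fun δ hδ => ?_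
  obtain ⟨N, hN, F, hF, G, hG, hSF, hTG, hFS, hGT⟩ :=
    exists_common_mod_mem_covers S T (half_pos hδ)
  have hN' : (0 : ℝ) < N := by exact_mod_cast hN
  have hFG : F ∪ G = range N := by
    refine (union_subset hF hG).antisymm fun t ht => ?_
    rcases h.symm ▸ Set.mem_univ t with hS | hT
    · exact mem_union_left _ (Nat.mod_eq_of_lt (mem_range.mp ht) ▸ hSF t hS)
    · exact mem_union_right _ (Nat.mod_eq_of_lt (mem_range.mp ht) ▸ hTG t hT)
  have hcard : (#(F ∩ G) : ℝ) = #F + #G - N := by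
    have := card_union_add_card_inter F G
    rw [hFG, card_range] at this
    rw [eq_sub_iff_add_eq, add_comm]
    exact_mod_cast this
  calc buckDensity (S ∩ T) ≤ #(F ∩ G) / N :=
        buckDensity_le_of_forall_mod_mem hN fun n hn => mem_inter.mpr ⟨hSF n hn.1, hTG n hn.2⟩
    _ ≤ buckDensity S + buckDensity T - 1 + δ := by
        rw [div_le_iff₀ hN', hcard]
        linarith

lemma buckDensity_univ : buckDensity Set.univ = 1 := by
  refine (csInf_le (bddBelow_buckCoverWeights _) (one_mem_buckCoverWeights _)).antisymm
    (le_csInf ⟨1, one_mem_buckCoverWeights _⟩ fun x hx => ?_)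
  obtain ⟨N, hN, hcover⟩ := exists_mod_mem_cover hx
  obtain ⟨F, -, hF, hFx⟩ := hcover N hN dvd_rfl
  have hrange : range N ⊆ F := fun t ht => Nat.mod_eq_of_lt (mem_range.mp ht) ▸ hF t trivial
  have hNF : (N : ℝ) ≤ #F := by simpa using card_le_card hrange
  have hN' : (0 : ℝ) < N := by exact_mod_cast hN
  nlinarith

def HasBuckMeasure (S : Set ℕ) (d : ℝ) : Prop :=
  BuckMeasurable S ∧ buckDensity S = d

lemma hasBuckMeasure_of_le {S : Set ℕ} {d : ℝ} (h : buckDensity S ≤ d)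
    (hc : buckDensity Sᶜ ≤ 1 - d) : HasBuckMeasure S d := by
  have := one_le_buckDensity_add_compl S
  exact ⟨by unfold BuckMeasurable; linarith, by linarith⟩

lemma HasBuckMeasure.nonneg {S : Set ℕ} {d : ℝ} (h : HasBuckMeasure S d) : 0 ≤ d :=
  h.2 ▸ buckDensity_nonneg S

lemma HasBuckMeasure.buckDensity_compl {S : Set ℕ} {d : ℝ} (h : HasBuckMeasure S d) :
    buckDensity Sᶜ = 1 - d := by
  have := h.1
  unfold BuckMeasurable at this
  linarith [h.2]

lemma hasBuckMeasure_empty : HasBuckMeasure ∅ 0 :=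
  hasBuckMeasure_of_le buckDensity_empty.le (by simp [buckDensity_univ])

lemma HasBuckMeasure.union {S T : Set ℕ} {d e : ℝ} (hST : Disjoint S T)
    (hS : HasBuckMeasure S d) (hT : HasBuckMeasure T e) : HasBuckMeasure (S ∪ T) (d + e) := by
  have hU : Sᶜ ∪ Tᶜ = Set.univ := by
    rw [← Set.compl_inter, hST.inter_eq, Set.compl_empty]
  refine hasBuckMeasure_of_le (hS.2 ▸ hT.2 ▸ buckDensity_union_le S T) ?_
  rw [Set.compl_union]
  linarith [buckDensity_inter_le_of_union_eq_univ hU, hS.buckDensity_compl, hT.buckDensity_compl]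

lemma hasBuckMeasure_biUnion {ι : Type*} {J : Finset ι} {S : ι → Set ℕ} {d : ι → ℝ}
    (hdisj : (J : Set ι).PairwiseDisjoint S) (h : ∀ j ∈ J, HasBuckMeasure (S j) (d j)) :
    HasBuckMeasure (⋃ j ∈ J, S j) (∑ j ∈ J, d j) := by
  classical
  induction J using Finset.induction_on with
  | empty => simpa using hasBuckMeasure_empty
  | insert i J hi ih =>
    rw [set_biUnion_insert, sum_insert hi]
    refine (h i (mem_insert_self i J)).union ?_
      (ih (hdisj.subset (by simp)) fun j hj => h j (mem_insert_of_mem hj))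
    exact Set.disjoint_iUnion₂_right.mpr fun j hj =>
      hdisj (by simp) (by simp [hj]) (ne_of_mem_of_not_mem hj hi).symm

open MeasureTheory in
lemma sum_sub_le_of_pairwiseDisjoint_Ico {ι : Type*} {J : Finset ι} {a b : ι → ℝ} {c d : ℝ}
    (hab : ∀ j ∈ J, a j ≤ b j)
    (hdisj : (J : Set ι).PairwiseDisjoint fun j => Set.Ico (a j) (b j))
    (hsub : ∀ j ∈ J, Set.Ico (a j) (b j) ⊆ Set.Ico c d) (hcd : c ≤ d) :
    ∑ j ∈ J, (b j - a j) ≤ d - c :=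
  calc ∑ j ∈ J, (b j - a j) = ∑ j ∈ J, volume.real (Set.Ico (a j) (b j)) :=
        sum_congr rfl fun j hj => (Real.volume_real_Ico_of_le (hab j hj)).symm
    _ = volume.real (⋃ j ∈ J, Set.Ico (a j) (b j)) :=
        (measureReal_biUnion_finset hdisj (fun _ _ => measurableSet_Ico)
          fun _ _ => measure_Ico_lt_top.ne).symm
    _ ≤ volume.real (Set.Ico c d) := measureReal_mono (Set.iUnion₂_subset hsub)
        measure_Ico_lt_top.ne
    _ = d - c := Real.volume_real_Ico_of_le hcd

open MeasureTheory in
lemma sub_le_sum_of_Ico_subset_biUnion {ι : Type*} {J : Finset ι} {a b : ι → ℝ} {c d : ℝ}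
    (hab : ∀ j ∈ J, a j ≤ b j) (hcov : Set.Ico c d ⊆ ⋃ j ∈ J, Set.Ico (a j) (b j)) :
    d - c ≤ ∑ j ∈ J, (b j - a j) := by
  rcases le_total c d with hcd | hdc
  · calc d - c = volume.real (Set.Ico c d) := (Real.volume_real_Ico_of_le hcd).symm
      _ ≤ volume.real (⋃ j ∈ J, Set.Ico (a j) (b j)) :=
          measureReal_mono hcov (measure_biUnion_lt_top J.finite_toSet
            fun _ _ => measure_Ico_lt_top).ne
      _ ≤ ∑ j ∈ J, volume.real (Set.Ico (a j) (b j)) := measureReal_biUnion_finset_le _ _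
      _ = ∑ j ∈ J, (b j - a j) :=
          sum_congr rfl fun j hj => Real.volume_real_Ico_of_le (hab j hj)
  · linarith [sum_nonneg fun j hj => sub_nonneg.mpr (hab j hj)]

lemma exists_uniform_Ico_partition {ε : ℝ} (hε : 0 < ε) :
    ∃ (s : ℕ) (a b : Fin s → ℝ),
      (Pairwise fun i j => Disjoint (Set.Ico (a i) (b i)) (Set.Ico (a j) (b j))) ∧
      ⋃ j, Set.Ico (a j) (b j) = Set.Ico 0 1 ∧
      ∀ j, 0 ≤ a j ∧ a j ≤ b j ∧ b j ≤ 1 ∧ b j - a j < ε := by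
  obtain ⟨n, hn⟩ := exists_nat_one_div_lt hε
  have hm : (0 : ℝ) < n + 1 := by positivity
  have hmono : Monotone fun i : ℕ => (i : ℝ) / (n + 1) := fun i j h => by
    dsimp only
    gcongr
  have hb (j : Fin (n + 1)) : ((j : ℝ) + 1) / (n + 1) ≤ 1 := by
    rw [div_le_one hm]
    exact_mod_cast j.isLt
  refine ⟨n + 1, fun j => (j : ℝ) / (n + 1), fun j => ((j : ℝ) + 1) / (n + 1),
    fun i j hij => ?_, ?_,
    fun j => ⟨by positivity, div_le_div_of_nonneg_right (by linarith) hm.le, hb j, ?_⟩⟩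
  · simpa using hmono.pairwise_disjoint_on_Ico_succ (Fin.val_injective.ne hij)
  · ext x
    simp only [Set.mem_iUnion, Set.mem_Ico]
    constructor
    · rintro ⟨j, hj, hj'⟩
      exact ⟨(by positivity : (0 : ℝ) ≤ j / (n + 1)).trans hj, hj'.trans_le (hb j)⟩
    · rintro ⟨hx₀, hx₁⟩
      have hxm : 0 ≤ x * (n + 1) := by positivity
      refine ⟨⟨⌊x * (n + 1)⌋₊, ?_⟩, ?_, ?_⟩
      · rw [Nat.floor_lt hxm]
        push_cast
        nlinarith
      · rw [div_le_iff₀ hm]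
        exact Nat.floor_le hxm
      · rw [lt_div_iff₀ hm]
        exact_mod_cast Nat.lt_floor_add_one (x * (n + 1))
  · rw [← sub_div, add_sub_cancel_left]
    exact hn

def IsBuckPartition {ι : Type*} (v : ℕ → ℝ) (ε : ℝ) (a b : ι → ℝ) : Prop :=
  (Pairwise fun i j => Disjoint (Set.Ico (a i) (b i)) (Set.Ico (a j) (b j))) ∧
    ⋃ j, Set.Ico (a j) (b j) = Set.Ico 0 1 ∧
    ∀ j, b j - a j < ε ∧ HasBuckMeasure {n | v n ∈ Set.Ico (a j) (b j)} (b j - a j)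

namespace IsBuckPartition

variable {ι : Type*} {v : ℕ → ℝ} {ε : ℝ} {a b : ι → ℝ}

lemma hasBuckMeasure_biUnion (hP : IsBuckPartition v ε a b) (J : Finset ι) :
    HasBuckMeasure (⋃ j ∈ J, {n | v n ∈ Set.Ico (a j) (b j)}) (∑ j ∈ J, (b j - a j)) :=
  _root_.hasBuckMeasure_biUnion (fun _ _ _ _ hij => (hP.1 hij).preimage v)
    fun j _ => (hP.2.2 j).2

lemma left_le_right (hP : IsBuckPartition v ε a b) (j : ι) : a j ≤ b j :=
  sub_nonneg.mp (hP.2.2 j).2.nonneg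

lemma buckDensity_preimage_Ico_le [Fintype ι] (hP : IsBuckPartition v ε a b) (hε : 0 ≤ ε)
    {c d : ℝ} (hc : 0 ≤ c) (hcd : c ≤ d) (hd : d ≤ 1) :
    buckDensity {n | v n ∈ Set.Ico c d} ≤ d - c + 2 * ε := by
  classical
  have hcover := hP.2.1
  have hlen (j : ι) := (hP.2.2 j).1
  set J := univ.filter fun j => (Set.Ico (a j) (b j) ∩ Set.Ico c d).Nonempty
  have hsub : {n | v n ∈ Set.Ico c d} ⊆ ⋃ j ∈ J, {n | v n ∈ Set.Ico (a j) (b j)} := by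
    intro n hn
    have hv : v n ∈ ⋃ j, Set.Ico (a j) (b j) := hcover ▸ ⟨hc.trans hn.1, hn.2.trans_le hd⟩
    obtain ⟨j, hj⟩ := Set.mem_iUnion.mp hv
    exact Set.mem_biUnion (mem_filter.mpr ⟨mem_univ j, v n, hj, hn⟩) hj
  have hsum : ∑ j ∈ J, (b j - a j) ≤ (d + ε) - (c - ε) := by
    refine sum_sub_le_of_pairwiseDisjoint_Ico (fun j _ => hP.left_le_right j) (hP.1.set_pairwise _)
      (fun j hj y hy => ?_) (by linarith)
    obtain ⟨x, hxj, hx⟩ := (mem_filter.mp hj).2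
    have := hlen j
    exact ⟨by linarith [hy.1, hxj.2, hx.1], by linarith [hy.2, hxj.1, hx.2]⟩
  calc buckDensity {n | v n ∈ Set.Ico c d}
      ≤ buckDensity (⋃ j ∈ J, {n | v n ∈ Set.Ico (a j) (b j)}) := buckDensity_mono hsub
    _ = ∑ j ∈ J, (b j - a j) := (hP.hasBuckMeasure_biUnion J).2
    _ ≤ d - c + 2 * ε := by linarith

lemma buckDensity_compl_preimage_Ico_le [Fintype ι] (hP : IsBuckPartition v ε a b)
    (hε : 0 ≤ ε) {c d : ℝ} (hc : 0 ≤ c) (hd : d ≤ 1) :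
    buckDensity {n | v n ∈ Set.Ico c d}ᶜ ≤ 1 - (d - c) + 2 * ε := by
  classical
  have hcover := hP.2.1
  have hlen (j : ι) := (hP.2.2 j).1
  set J := univ.filter fun j => Set.Ico (a j) (b j) ⊆ Set.Ico c d
  have hsub :
      {n | v n ∈ Set.Ico c d}ᶜ ⊆ (⋃ j ∈ J, {n | v n ∈ Set.Ico (a j) (b j)})ᶜ :=
    Set.compl_subset_compl.mpr <| Set.iUnion₂_subset fun j hj _ hn => (mem_filter.mp hj).2 hn
  have hsum : (d - ε) - (c + ε) ≤ ∑ j ∈ J, (b j - a j) := by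
    refine sub_le_sum_of_Ico_subset_biUnion (fun j _ => hP.left_le_right j) fun x hx => ?_
    have hx' : x ∈ ⋃ j, Set.Ico (a j) (b j) :=
      hcover ▸ ⟨by linarith [hx.1], by linarith [hx.2]⟩
    obtain ⟨j, hj⟩ := Set.mem_iUnion.mp hx'
    have := hlen j
    refine Set.mem_biUnion (mem_filter.mpr ⟨mem_univ j, fun y hy => ?_⟩) hj
    exact ⟨by linarith [hy.1, hj.2, hx.1], by linarith [hy.2, hj.1, hx.2]⟩
  calc buckDensity {n | v n ∈ Set.Ico c d}ᶜ
      ≤ buckDensity (⋃ j ∈ J, {n | v n ∈ Set.Ico (a j) (b j)})ᶜ := buckDensity_mono hsub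
    _ = 1 - ∑ j ∈ J, (b j - a j) := (hP.hasBuckMeasure_biUnion J).buckDensity_compl
    _ ≤ 1 - (d - c) + 2 * ε := by linarith

end IsBuckPartition

theorem stmt2_general (v : ℕ → ℝ) :
    BuckUD v ↔
    ∀ ε > (0 : ℝ), ∃ (s : ℕ) (a b : Fin s → ℝ),
      (Pairwise fun i j => Disjoint (Set.Ico (a i) (b i)) (Set.Ico (a j) (b j))) ∧
      (⋃ j, Set.Ico (a j) (b j)) = Set.Ico (0 : ℝ) 1 ∧
      ∀ j, b j - a j < ε ∧
        BuckMeasurable {n : ℕ | v n ∈ Set.Ico (a j) (b j)} ∧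
        buckDensity {n : ℕ | v n ∈ Set.Ico (a j) (b j)} = b j - a j := by
  constructor
  · intro hud ε hε
    obtain ⟨s, a, b, hdisj, hcover, hab⟩ := exists_uniform_Ico_partition hε
    exact ⟨s, a, b, hdisj, hcover, fun j =>
      ⟨(hab j).2.2.2, hud _ _ (hab j).1 (hab j).2.1 (hab j).2.2.1⟩⟩
  · intro H c d hc hcd hd
    have hpart (δ : ℝ) (hδ : 0 < δ) :
        ∃ (s : ℕ) (a b : Fin s → ℝ), IsBuckPartition v (δ / 2) a b :=
      H _ (half_pos hδ)
    refine hasBuckMeasure_of_le (le_of_forall_pos_le_add fun δ hδ => ?_)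
      (le_of_forall_pos_le_add fun δ hδ => ?_)
    · obtain ⟨s, a, b, hP⟩ := hpart δ hδ
      linarith [hP.buckDensity_preimage_Ico_le (half_pos hδ).le hc hcd hd]
    · obtain ⟨s, a, b, hP⟩ := hpart δ hδ
      linarith [hP.buckDensity_compl_preimage_Ico_le (half_pos hδ).le hc hd]

/-- Criterion for Buck uniform distribution via fine disjoint interval partitions
of [0,1). -/
theorem stmt2 (v : ℕ → ℝ) (hv : ∀ n, v n ∈ Set.Icc (0 : ℝ) 1) :
    BuckUD v ↔
    ∀ ε > (0 : ℝ), ∃ (s : ℕ) (a b : Fin s → ℝ),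
      (Pairwise fun i j => Disjoint (Set.Ico (a i) (b i)) (Set.Ico (a j) (b j))) ∧
      (⋃ j, Set.Ico (a j) (b j)) = Set.Ico (0 : ℝ) 1 ∧
      ∀ j, b j - a j < ε ∧
        BuckMeasurable {n : ℕ | v n ∈ Set.Ico (a j) (b j)} ∧
        buckDensity {n : ℕ | v n ∈ Set.Ico (a j) (b j)} = b j - a j :=
  stmt2_general v
end

section
/- If a sequence v : ℕ → [0,1] is Buck uniformly distributed modulo 1, then the set {n : v(n) = x} has Buck measure density zero for every x ∈ [0,1]. -/
open scoped BigOperators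

/-- A Buck uniformly distributed sequence hits any single value with density zero. -/
theorem stmt11 (v : ℕ → ℝ) (hv : ∀ n, v n ∈ Set.Icc (0 : ℝ) 1) (h : BuckUD v)
    (x : ℝ) (hx : x ∈ Set.Icc (0 : ℝ) 1) :
    buckDensity {n : ℕ | v n = x} = 0 := by
  have hnonneg : ∀ S : Set ℕ, 0 ≤ buckDensity S := by
    intro S
    apply Real.sInf_nonneg
    rintro y ⟨k, r, D, hD, _, rfl⟩
    exact Finset.sum_nonneg fun j _ => by positivity
  have hmono : ∀ S T : Set ℕ, S ⊆ T → buckDensity S ≤ buckDensity T := by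
    intro S T hST
    apply csInf_le_csInf
    · exact ⟨0, fun y ⟨k, r, D, hD, _, hy⟩ => hy ▸
        Finset.sum_nonneg fun j _ => by positivity⟩
    · refine ⟨1, 1, fun _ => 0, fun _ => 1, fun j => one_pos, ?_, by simp⟩
      intro n _
      simp [Nat.mod_one]
    · rintro y ⟨k, r, D, hD, hcov, rfl⟩
      exact ⟨k, r, D, hD, hST.trans hcov, rfl⟩
  rcases eq_or_lt_of_le hx.2 with hx1 | hx1
  · -- x = 1
    have h01 := h 0 1 le_rfl zero_le_one le_rfl
    have hcompl : {n : ℕ | v n ∈ Set.Ico (0:ℝ) 1}ᶜ = {n : ℕ | v n = x} := by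
      ext n
      simp only [Set.mem_compl_iff, Set.mem_setOf_eq, Set.mem_Ico, not_and, not_lt]
      subst hx1
      constructor
      · intro hn
        exact le_antisymm (hv n).2 (hn (hv n).1)
      · intro hn _
        exact hn.ge
    have : buckDensity {n : ℕ | v n ∈ Set.Ico (0:ℝ) 1}ᶜ = 0 := by
      have := h01.1
      unfold BuckMeasurable at this
      rw [h01.2] at this
      linarith
    rw [← hcompl, this]
  · -- x < 1
    refine le_antisymm ?_ (hnonneg _)
    refine le_of_forall_pos_le_add ?_
    intro ε hε
    set b := min 1 (x + ε) with hb
    have hxb : x < b := lt_min hx1 (by linarith)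
    have hsub : {n : ℕ | v n = x} ⊆ {n : ℕ | v n ∈ Set.Ico x b} := by
      intro n hn
      simp only [Set.mem_setOf_eq] at hn ⊢
      exact ⟨hn.ge, hn.trans_lt hxb⟩
    have hd := (h x b hx.1 hxb.le (min_le_left _ _)).2
    calc buckDensity {n : ℕ | v n = x} ≤ b - x := hd ▸ hmono _ _ hsub
      _ ≤ ε := by
          have : b ≤ x + ε := min_le_right _ _
          linarith
      _ ≤ 0 + ε := by linarith
end

section
/- If T_π is differentiable at some point α ∈ [0,1), then its derivative T_π'(α) is an integer. More precisely, T_π'(α) = π_{s+1}(a_s) − π_{s+1}(a_s − 1) for all sufficiently large s with a_s ≠ 0, or T_π'(α) = π_{s+1}(1) − π_{s+1}(0) along infinitely many s if a_s = 0 infinitely often, where a_s = b_s(α). -/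
/-!
Replacing only the digit `a_s` of `α` by a neighbouring digit `k` (`a_s - 1`, or `1` when
`a_s = 0`) gives a point whose Cantor digits are again those of `α` except at `s`, by uniqueness of
Cantor digits. It differs from `α` by `(k - a_s) / B_{s+1} = ±1 / B_{s+1}` and its image under
`T` differs from `T α` by `(π_s k - π_s a_s) / B_{s+1}`, so the difference quotient is the integer
`±(π_s k - π_s a_s)`. These points tend to `α`, so the integers converge to `T' α` and are
eventually equal to it.
-/

open scoped BigOperators

/-- `Bprod m n = m 0 * m 1 * ⋯ * m (n-1)`, the partial products of the bases. -/
def Bprod (m : ℕ → ℕ) (n : ℕ) : ℕ := ∏ i ∈ Finset.range n, m i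

/-- `b` is the sequence of Cantor series digits of `α` with respect to the bases `m`:
`α = Σ b j / Bprod m (j+1)`, with `b j < m j`, and `b j < m j - 1` infinitely often. -/
def IsCantorDigits (m : ℕ → ℕ) (α : ℝ) (b : ℕ → ℕ) : Prop :=
  (∀ j, b j < m j) ∧ (∀ N, ∃ j, N ≤ j ∧ b j + 1 < m j) ∧
  α = ∑' j, (b j : ℝ) / (Bprod m (j + 1) : ℝ)

open Filter Topology Function

noncomputable def cantorSum (m c : ℕ → ℕ) : ℝ := ∑' j, (c j : ℝ) / (Bprod m (j + 1) : ℝ)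

section Bprod

variable {m : ℕ → ℕ}

@[simp] lemma Bprod_zero : Bprod m 0 = 1 := Finset.prod_range_zero _

lemma Bprod_succ (n : ℕ) : Bprod m (n + 1) = Bprod m n * m n := Finset.prod_range_succ _ _

lemma Bprod_pos (hm : ∀ i, 0 < m i) (n : ℕ) : 0 < Bprod m n :=
  Finset.prod_pos fun i _ => hm i

lemma Bprod_add (n s : ℕ) : Bprod m (n + s) = Bprod m s * Bprod (fun i => m (i + s)) n := by
  unfold Bprod
  rw [add_comm n s, Finset.prod_range_add]
  simp only [add_comm s]

lemma tendsto_Bprod_atTop (h2 : ∀ i, 2 ≤ m i) :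
    Tendsto (fun n => (Bprod m n : ℝ)) atTop atTop := by
  have hle : ∀ n, n ≤ Bprod m n := fun n => calc
    n ≤ 2 ^ n := Nat.lt_two_pow_self.le
    _ = 2 ^ (Finset.range n).card := by rw [Finset.card_range]
    _ ≤ Bprod m n := Finset.pow_card_le_prod _ _ _ fun i _ => h2 i
  exact tendsto_natCast_atTop_atTop.comp (tendsto_atTop_mono hle tendsto_id)

lemma inv_Bprod_sub_inv_Bprod_succ (hm : ∀ i, 0 < m i) (n : ℕ) :
    (Bprod m n : ℝ)⁻¹ - (Bprod m (n + 1) : ℝ)⁻¹ = ((m n : ℝ) - 1) / Bprod m (n + 1) := by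
  have hB : (0 : ℝ) < Bprod m n := by exact_mod_cast Bprod_pos hm n
  have hmn : (0 : ℝ) < m n := by exact_mod_cast hm n
  rw [Bprod_succ, Nat.cast_mul]
  field_simp

lemma hasSum_maxDigits (h2 : ∀ i, 2 ≤ m i) :
    HasSum (fun j => ((m j : ℝ) - 1) / Bprod m (j + 1)) 1 := by
  have hm : ∀ i, 0 < m i := fun i => zero_lt_two.trans_le (h2 i)
  simp_rw [← inv_Bprod_sub_inv_Bprod_succ hm]
  refine (hasSum_iff_tendsto_nat_of_nonneg (fun j => ?_) 1).2 ?_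
  · rw [inv_Bprod_sub_inv_Bprod_succ hm]
    have : (1 : ℝ) ≤ m j := by exact_mod_cast hm j
    have := Bprod_pos hm (j + 1)
    positivity
  · simp_rw [Finset.sum_range_sub', Bprod_zero, Nat.cast_one, inv_one]
    simpa using (tendsto_inv_atTop_zero.comp (tendsto_Bprod_atTop h2)).const_sub (1 : ℝ)

end Bprod

section cantorSum

variable {m c : ℕ → ℕ}

lemma cantorSum_nonneg : 0 ≤ cantorSum m c := tsum_nonneg fun _ => by positivity

lemma digit_div_le_maxDigit_div (hc : ∀ j, c j < m j) (j : ℕ) :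
    (c j : ℝ) / Bprod m (j + 1) ≤ ((m j : ℝ) - 1) / Bprod m (j + 1) := by
  have : (c j : ℝ) + 1 ≤ m j := by exact_mod_cast hc j
  gcongr
  linarith

lemma summable_cantorSum (h2 : ∀ i, 2 ≤ m i) (hc : ∀ j, c j < m j) :
    Summable fun j => (c j : ℝ) / Bprod m (j + 1) :=
  (hasSum_maxDigits h2).summable.of_nonneg_of_le (fun _ => by positivity)
    (digit_div_le_maxDigit_div hc)

lemma cantorSum_lt_one (h2 : ∀ i, 2 ≤ m i) (hc : ∀ j, c j < m j) {j : ℕ}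
    (hj : c j + 1 < m j) : cantorSum m c < 1 := by
  refine hasSum_lt (i := j) (digit_div_le_maxDigit_div hc) ?_
    (summable_cantorSum h2 hc).hasSum (hasSum_maxDigits h2)
  have : (c j : ℝ) + 1 < m j := by exact_mod_cast hj
  have := Bprod_pos (fun i => zero_lt_two.trans_le (h2 i)) (j + 1)
  gcongr
  linarith

lemma tsum_tail_eq (s : ℕ) :
    ∑' j, (c (j + s) : ℝ) / Bprod m (j + s + 1)
      = (Bprod m s : ℝ)⁻¹ * cantorSum (fun i => m (i + s)) (fun i => c (i + s)) := by
  rw [cantorSum, ← tsum_mul_left]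
  refine tsum_congr fun j => ?_
  rw [add_right_comm, Bprod_add, Nat.cast_mul, div_mul_eq_div_div_swap, div_eq_inv_mul]

lemma tsum_tail_lt (h2 : ∀ i, 2 ≤ m i) (hc : ∀ j, c j < m j)
    (hio : ∀ N, ∃ j, N ≤ j ∧ c j + 1 < m j) (s : ℕ) :
    ∑' j, (c (j + s) : ℝ) / Bprod m (j + s + 1) < (Bprod m s : ℝ)⁻¹ := by
  obtain ⟨j, hsj, hj⟩ := hio s
  have hB : (0 : ℝ) < (Bprod m s : ℝ)⁻¹ := by
    have := Bprod_pos (fun i => zero_lt_two.trans_le (h2 i)) s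
    positivity
  rw [tsum_tail_eq]
  refine mul_lt_of_lt_one_right hB
    (cantorSum_lt_one (fun _ => h2 _) (fun _ => hc _) (j := j - s) ?_)
  rwa [Nat.sub_add_cancel hsj]

lemma cantorSum_lt_of_lt {c' : ℕ → ℕ} (h2 : ∀ i, 2 ≤ m i) (hc : ∀ j, c j < m j)
    (hc' : ∀ j, c' j < m j) (hio : ∀ N, ∃ j, N ≤ j ∧ c j + 1 < m j) {s : ℕ}
    (hagree : ∀ t < s, c t = c' t) (hlt : c s < c' s) : cantorSum m c < cantorSum m c' := by
  have hheads : ∑ t ∈ Finset.range s, (c t : ℝ) / Bprod m (t + 1)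
      = ∑ t ∈ Finset.range s, (c' t : ℝ) / Bprod m (t + 1) :=
    Finset.sum_congr rfl fun t ht => by rw [hagree t (Finset.mem_range.1 ht)]
  have htail := tsum_tail_lt h2 hc hio (s + 1)
  have htail' : 0 ≤ ∑' j, (c' (j + (s + 1)) : ℝ) / Bprod m (j + (s + 1) + 1) :=
    tsum_nonneg fun _ => by positivity
  have hdigit : ((c s : ℝ) + 1) / Bprod m (s + 1) ≤ (c' s : ℝ) / Bprod m (s + 1) := by
    gcongr
    exact_mod_cast hlt
  rw [add_div, one_div] at hdigit
  rw [cantorSum, cantorSum, ← (summable_cantorSum h2 hc).sum_add_tsum_nat_add (s + 1),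
    ← (summable_cantorSum h2 hc').sum_add_tsum_nat_add (s + 1), Finset.sum_range_succ,
    Finset.sum_range_succ, hheads]
  linarith

lemma cantorSum_update (hc : Summable fun j => (c j : ℝ) / Bprod m (j + 1)) (s k : ℕ) :
    cantorSum m (update c s k) = cantorSum m c + ((k : ℝ) - c s) / Bprod m (s + 1) := by
  have hupd := hc.hasSum.update s ((k : ℝ) / Bprod m (s + 1))
  rw [← funext (apply_update (fun j (n : ℕ) => (n : ℝ) / Bprod m (j + 1)) c s k)] at hupd
  rw [cantorSum, hupd.tsum_eq, cantorSum, sub_div]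
  ring

end cantorSum

section IsCantorDigits

variable {m c : ℕ → ℕ} {x : ℝ}

lemma IsCantorDigits.mem_Ico (h2 : ∀ i, 2 ≤ m i) (h : IsCantorDigits m x c) :
    x ∈ Set.Ico 0 1 := by
  obtain ⟨hc, hio, rfl⟩ := h
  obtain ⟨j, -, hj⟩ := hio 0
  exact ⟨cantorSum_nonneg, cantorSum_lt_one h2 hc hj⟩

lemma IsCantorDigits.unique {c' : ℕ → ℕ} (h2 : ∀ i, 2 ≤ m i) (h : IsCantorDigits m x c)
    (h' : IsCantorDigits m x c') : c = c' := by
  obtain ⟨hc, hio, hx⟩ := h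
  obtain ⟨hc', hio', hx'⟩ := h'
  funext s
  induction s using Nat.strong_induction_on with
  | _ s ih =>
    rcases lt_trichotomy (c s) (c' s) with hlt | heq | hgt
    · exact absurd (hx.symm.trans hx') (cantorSum_lt_of_lt h2 hc hc' hio ih hlt).ne
    · exact heq
    · exact absurd (hx'.symm.trans hx)
        (cantorSum_lt_of_lt h2 hc' hc hio' (fun t ht => (ih t ht).symm) hgt).ne

lemma IsCantorDigits.update (h2 : ∀ i, 2 ≤ m i) (h : IsCantorDigits m x c) {s k : ℕ}
    (hk : k < m s) :
    IsCantorDigits m (x + ((k : ℝ) - c s) / Bprod m (s + 1)) (update c s k) := by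
  obtain ⟨hc, hio, rfl⟩ := h
  refine ⟨fun j => ?_, fun N => ?_, (cantorSum_update (summable_cantorSum h2 hc) s k).symm⟩
  · rcases eq_or_ne j s with rfl | hjs
    · simpa using hk
    · simpa [hjs] using hc j
  · obtain ⟨j, hNj, hj⟩ := hio (max N (s + 1))
    have hjs : j ≠ s := by omega
    exact ⟨j, le_of_max_le_left hNj, by simpa [hjs] using hj⟩

end IsCantorDigits

lemma exists_eventually_eq_of_tendsto_intCast {ι : Type*} {l : Filter ι} [l.NeBot]
    {z : ι → ℤ} {d : ℝ} (h : Tendsto (fun n => (z n : ℝ)) l (𝓝 d)) :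
    ∃ w : ℤ, d = w ∧ ∀ᶠ n in l, z n = w := by
  obtain ⟨w, rfl⟩ : d ∈ Set.range ((↑) : ℤ → ℝ) :=
    Int.isClosedEmbedding_coe_real.isClosed_range.mem_of_tendsto h
      (Eventually.of_forall fun n => ⟨z n, rfl⟩)
  have hz : Tendsto z l (𝓝 w) := Int.isClosedEmbedding_coe_real.isInducing.tendsto_nhds_iff.2 h
  rw [nhds_discrete, tendsto_pure] at hz
  exact ⟨w, rfl, hz⟩

lemma slope_update_digit {m : ℕ → ℕ} {π : ℕ → ℕ → ℕ} {b : ℝ → ℕ → ℕ} {T : ℝ → ℝ} {α : ℝ}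
    (h2 : ∀ i, 2 ≤ m i) (hπ : ∀ j, Set.MapsTo (π j) (Set.Iio (m j)) (Set.Iio (m j)))
    (hb : ∀ x ∈ Set.Ico (0 : ℝ) 1, IsCantorDigits m x (b x))
    (hT : ∀ x ∈ Set.Ico (0 : ℝ) 1, T x = cantorSum m fun j => π j (b x j))
    (hα : α ∈ Set.Ico (0 : ℝ) 1) {s k : ℕ} (hk : k < m s) :
    slope T α (α + ((k : ℝ) - b α s) / Bprod m (s + 1))
      = ((π s k : ℝ) - π s (b α s)) / ((k : ℝ) - b α s) := by
  have hdig := (hb α hα).update h2 hk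
  have hmem := hdig.mem_Ico h2
  have hbx : b _ = update (b α) s k := (hb _ hmem).unique h2 hdig
  have hπα : Summable fun j => (π j (b α j) : ℝ) / Bprod m (j + 1) :=
    summable_cantorSum h2 fun j => hπ j ((hb α hα).1 j)
  have hB : (Bprod m (s + 1) : ℝ) ≠ 0 := by
    exact_mod_cast (Bprod_pos (fun i => zero_lt_two.trans_le (h2 i)) _).ne'
  rw [slope_def_field, hT _ hmem, hT α hα, hbx, funext (apply_update π (b α) s k),
    cantorSum_update hπα, add_sub_cancel_left, add_sub_cancel_left, div_div_div_cancel_right₀ hB]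

def neighbourDigit (a : ℕ) : ℕ := if a = 0 then 1 else a - 1

lemma neighbourDigit_lt {a n : ℕ} (ha : a < n) (hn : 2 ≤ n) : neighbourDigit a < n := by
  unfold neighbourDigit
  split_ifs <;> omega

lemma cast_neighbourDigit_sub (a : ℕ) :
    (neighbourDigit a : ℝ) - a = if a = 0 then 1 else -1 := by
  unfold neighbourDigit
  split_ifs with h
  · simp [h]
  · simp [Nat.cast_sub (Nat.one_le_iff_ne_zero.2 h)]

lemma abs_cast_neighbourDigit_sub (a : ℕ) : |(neighbourDigit a : ℝ) - a| = 1 := by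
  rw [cast_neighbourDigit_sub]
  split_ifs <;> simp

lemma div_neighbourDigit_sub (f : ℕ → ℝ) (a : ℕ) :
    (f (neighbourDigit a) - f a) / ((neighbourDigit a : ℝ) - a)
      = if a = 0 then f 1 - f 0 else f a - f (a - 1) := by
  rw [cast_neighbourDigit_sub]
  unfold neighbourDigit
  split_ifs with h
  · simp [h]
  · rw [div_neg, div_one, neg_sub]

lemma IsCantorDigits.tendsto_update_neighbourDigit {m a : ℕ → ℕ} {x : ℝ}
    (h2 : ∀ i, 2 ≤ m i) (h : IsCantorDigits m x a) :
    Tendsto (fun s => x + ((neighbourDigit (a s) : ℝ) - a s) / Bprod m (s + 1)) atTop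
      (𝓝[Set.Ico 0 1 \ {x}] x) := by
  have hdist : ∀ s, ‖x + ((neighbourDigit (a s) : ℝ) - a s) / Bprod m (s + 1) - x‖
      = (Bprod m (s + 1) : ℝ)⁻¹ := fun s => by
    rw [add_sub_cancel_left, norm_div, Real.norm_eq_abs, abs_cast_neighbourDigit_sub,
      Real.norm_natCast, one_div]
  refine tendsto_nhdsWithin_iff.2 ⟨?_, Eventually.of_forall fun s => ⟨?_, fun hs => ?_⟩⟩
  · exact tendsto_iff_norm_sub_tendsto_zero.2 <| (tendsto_congr hdist).2 <|
      tendsto_inv_atTop_zero.comp ((tendsto_Bprod_atTop h2).comp (tendsto_add_atTop_nat 1))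
  · exact (h.update h2 (neighbourDigit_lt (h.1 s) (h2 s))).mem_Ico h2
  · have hB := Bprod_pos (fun i => zero_lt_two.trans_le (h2 i)) (s + 1)
    have := hdist s
    rw [Set.mem_singleton_iff.1 hs, sub_self, norm_zero] at this
    exact (inv_pos.2 (Nat.cast_pos.2 hB)).ne this

theorem stmt15_general (m : ℕ → ℕ) (h2 : ∀ i, 2 ≤ m i)
    (π : ℕ → ℕ → ℕ)
    (hbij : ∀ i, Set.BijOn (π i) (Set.Iio (m i)) (Set.Iio (m i)))
    (b : ℝ → ℕ → ℕ) (hb : ∀ α ∈ Set.Ico (0 : ℝ) 1, IsCantorDigits m α (b α))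
    (T : ℝ → ℝ)
    (hT : ∀ α ∈ Set.Ico (0 : ℝ) 1,
      T α = ∑' j, (π j (b α j) : ℝ) / (Bprod m (j + 1) : ℝ))
    (α : ℝ) (hα : α ∈ Set.Ico (0 : ℝ) 1) (d : ℝ)
    (hd : HasDerivWithinAt T d (Set.Ico (0 : ℝ) 1) α) :
    (∃ z : ℤ, d = (z : ℝ)) ∧
    (∃ N, ∀ s ≥ N, b α s ≠ 0 →
      d = (π s (b α s) : ℝ) - (π s (b α s - 1) : ℝ)) ∧
    ((∀ N, ∃ s ≥ N, b α s = 0) →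
      ∀ N, ∃ s ≥ N, b α s = 0 ∧ d = (π s 1 : ℝ) - (π s 0 : ℝ)) := by
  let z : ℕ → ℤ := fun s =>
    if b α s = 0 then π s 1 - π s 0 else π s (b α s) - π s (b α s - 1)
  have hslope : ∀ s, slope T α (α + ((neighbourDigit (b α s) : ℝ) - b α s) / Bprod m (s + 1))
      = z s := fun s => by
    rw [slope_update_digit h2 (fun i => (hbij i).mapsTo) hb hT hα
      (neighbourDigit_lt ((hb α hα).1 s) (h2 s)), div_neighbourDigit_sub fun n => (π s n : ℝ)]
    simp only [z]
    split_ifs <;> push_cast <;> rfl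
  obtain ⟨w, hdw, hzw⟩ := exists_eventually_eq_of_tendsto_intCast <|
    ((hasDerivWithinAt_iff_tendsto_slope.1 hd).comp
      ((hb α hα).tendsto_update_neighbourDigit h2)).congr hslope
  obtain ⟨N, hN⟩ := eventually_atTop.1 hzw
  refine ⟨⟨w, hdw⟩, ⟨N, fun s hs hs0 => ?_⟩, fun hzero N' => ?_⟩
  · simpa [z, hs0, ← hN s hs] using hdw
  · obtain ⟨s, hs, hs0⟩ := hzero (max N N')
    refine ⟨s, le_of_max_le_right hs, hs0, ?_⟩
    simpa [z, hs0, ← hN s (le_of_max_le_left hs)] using hdw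

/-- If the permuted-digit map has a derivative at a point, the derivative is an integer,
given by differences of permutation values at consecutive digits. -/
theorem stmt15 (m : ℕ → ℕ) (h2 : ∀ i, 2 ≤ m i)
    (hcop : Pairwise fun i j => Nat.Coprime (m i) (m j))
    (π : ℕ → ℕ → ℕ)
    (hbij : ∀ i, Set.BijOn (π i) (Set.Iio (m i)) (Set.Iio (m i)))
    (b : ℝ → ℕ → ℕ) (hb : ∀ α ∈ Set.Ico (0 : ℝ) 1, IsCantorDigits m α (b α))
    (T : ℝ → ℝ)
    (hT : ∀ α ∈ Set.Ico (0 : ℝ) 1,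
      T α = ∑' j, (π j (b α j) : ℝ) / (Bprod m (j + 1) : ℝ))
    (α : ℝ) (hα : α ∈ Set.Ico (0 : ℝ) 1) (d : ℝ)
    (hd : HasDerivWithinAt T d (Set.Ico (0 : ℝ) 1) α) :
    (∃ z : ℤ, d = (z : ℝ)) ∧
    (∃ N, ∀ s ≥ N, b α s ≠ 0 →
      d = (π s (b α s) : ℝ) - (π s (b α s - 1) : ℝ)) ∧
    ((∀ N, ∃ s ≥ N, b α s = 0) →
      ∀ N, ∃ s ≥ N, b α s = 0 ∧ d = (π s 1 : ℝ) - (π s 0 : ℝ)) :=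
  stmt15_general m h2 π hbij b hb T hT α hα d hd
end
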